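/- Risk of a composed (autoregressive) predictor is bounded by the sum of position-wise risks: Let P be a probability distribution on V^T (sequences of length T over finite alphabet V, with T ≥ 2), strictly positive. For i = 2,…,T let μ_i assign to each prefix v_{1:i−1} a strictly positive probability distribution over V, and define the composed predictor μ(v_T | v_1) := Σ_{v_{2:T−1}} Π_{i=2}^{T} μ_i(v_i | v_{1:i−1}). Then E_P[−log μ(V_T | V_1)] ≤ Σ_{i=2}^{T} E_P[−log μ_i(V_i | V_{1:i−1})]. -/

import Mathlib

/-!
The composed probability `μc (v first) (v last)` is a sum of nonnegative path weights, one of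
which is the weight `∏ i, μ i v (v i)` of the observed sequence `v` itself. Hence
`-log μc ≤ ∑ i, -log μ i v (v i)` pointwise in `v`, and averaging against `P` gives the bound.
-/

open Finset

lemma Real.neg_log_sum_le_neg_log_of_mem {ι : Type*} {s : Finset ι} {f : ι → ℝ}
    (hf : ∀ i ∈ s, 0 ≤ f i) {a : ι} (ha : a ∈ s) (hfa : 0 < f a) :
    -Real.log (∑ i ∈ s, f i) ≤ -Real.log (f a) :=
  neg_le_neg (Real.log_le_log hfa (single_le_sum hf ha))

lemma Real.neg_log_prod {ι : Type*} (s : Finset ι) {f : ι → ℝ} (hf : ∀ i ∈ s, 0 < f i) :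
    -Real.log (∏ i ∈ s, f i) = ∑ i ∈ s, -Real.log (f i) := by
  rw [Real.log_prod fun i hi => (hf i hi).ne', sum_neg_distrib]

lemma sum_mul_le_sum_sum_mul_of_le {α ι : Type*} [Fintype α] {P g : α → ℝ}
    (hP : ∀ v, 0 ≤ P v) (s : Finset ι) {f : ι → α → ℝ} (hgf : ∀ v, g v ≤ ∑ i ∈ s, f i v) :
    ∑ v, P v * g v ≤ ∑ i ∈ s, ∑ v, P v * f i v :=
  calc ∑ v, P v * g v ≤ ∑ v, P v * ∑ i ∈ s, f i v :=
        sum_le_sum fun v _ => mul_le_mul_of_nonneg_left (hgf v) (hP v)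
    _ = ∑ i ∈ s, ∑ v, P v * f i v := by simp_rw [mul_sum]; exact sum_comm

theorem stmt6 {V : Type*} [Fintype V] [DecidableEq V]
    (T : ℕ) (hT : 2 ≤ T)
    (P : (Fin T → V) → ℝ) (hPpos : ∀ v, 0 < P v)
    (μ : Fin T → (Fin T → V) → V → ℝ)
    (hpos : ∀ i v y, 0 < μ i v y) :
    let first : Fin T := ⟨0, by omega⟩
    let last : Fin T := ⟨T - 1, by omega⟩
    let μc : V → V → ℝ := fun v0 vT =>
      ∑ w ∈ Finset.univ.filter (fun w : Fin T → V => w first = v0 ∧ w last = vT),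
        ∏ i ∈ Finset.univ \ {first}, μ i w (w i)
    (∑ v, P v * (-Real.log (μc (v first) (v last)))) ≤
      ∑ i ∈ Finset.univ \ {first}, ∑ v, P v * (-Real.log (μ i v (v i))) := by
  intro first last μc
  have path_pos : ∀ w : Fin T → V, 0 < ∏ i ∈ univ \ {first}, μ i w (w i) :=
    fun w => prod_pos fun i _ => hpos i w (w i)
  refine sum_mul_le_sum_sum_mul_of_le (fun v => (hPpos v).le) _ fun v => ?_
  rw [← Real.neg_log_prod _ fun i _ => hpos i v (v i)]
  exact Real.neg_log_sum_le_neg_log_of_mem (fun w _ => (path_pos w).le) (by simp) (path_pos v)
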